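/- (Halász–Montgomery inequality) Let ξ, φ₁, ..., φ_R be vectors in a complex inner product space. Then ∑_{r=1}^R |⟨ξ, φ_r⟩| ≤ ‖ξ‖ · (∑_{r=1}^R ∑_{s=1}^R |⟨φ_r, φ_s⟩|)^{1/2}. -/
import Mathlib


open scoped InnerProductSpace

/-- Halász–Montgomery inequality. -/
theorem halasz_montgomery
    {E : Type*} [NormedAddCommGroup E] [InnerProductSpace ℂ E]
    (R : ℕ) (ξ : E) (φ : Fin R → E) :
    (∑ r, ‖⟪ξ, φ r⟫_ℂ‖) ≤
      ‖ξ‖ * Real.sqrt (∑ r, ∑ s, ‖⟪φ r, φ s⟫_ℂ‖) := by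
  classical
  set c : Fin R → ℂ := fun r =>
    if h : ⟪ξ, φ r⟫_ℂ = 0 then 0 else (‖⟪ξ, φ r⟫_ℂ‖ : ℂ) / ⟪ξ, φ r⟫_ℂ with hc
  have hcnorm : ∀ r, ‖c r‖ ≤ 1 := by
    intro r
    simp only [hc]
    split_ifs with h
    · simp
    · rw [norm_div, Complex.norm_real, norm_norm, div_self (norm_ne_zero_iff.2 h)]
  have hcmul : ∀ r, c r * ⟪ξ, φ r⟫_ℂ = (‖⟪ξ, φ r⟫_ℂ‖ : ℂ) := by
    intro r
    simp only [hc]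
    split_ifs with h
    · simp [h]
    · field_simp
  set v : E := ∑ r, c r • φ r with hv
  have h1 : ⟪ξ, v⟫_ℂ = (∑ r, ‖⟪ξ, φ r⟫_ℂ‖ : ℝ) := by
    rw [hv, inner_sum]
    push_cast
    exact Finset.sum_congr rfl fun r _ => by rw [inner_smul_right, hcmul r]
  have h2 : (∑ r, ‖⟪ξ, φ r⟫_ℂ‖) ≤ ‖ξ‖ * ‖v‖ := by
    calc (∑ r, ‖⟪ξ, φ r⟫_ℂ‖) = ‖⟪ξ, v⟫_ℂ‖ := by
          rw [h1, Complex.norm_real, Real.norm_of_nonneg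
            (Finset.sum_nonneg fun r _ => norm_nonneg _)]
      _ ≤ ‖ξ‖ * ‖v‖ := norm_inner_le_norm _ _
  have h3 : ‖v‖ ≤ Real.sqrt (∑ r, ∑ s, ‖⟪φ r, φ s⟫_ℂ‖) := by
    rw [show ‖v‖ = Real.sqrt (‖v‖^2) by rw [Real.sqrt_sq (norm_nonneg _)]]
    apply Real.sqrt_le_sqrt
    have : (‖v‖ : ℝ)^2 = ‖(⟪v, v⟫_ℂ)‖ := by
      rw [inner_self_eq_norm_sq_to_K (𝕜 := ℂ) v]
      simp
    rw [this, hv, inner_sum]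
    calc ‖∑ s, ⟪∑ r, c r • φ r, c s • φ s⟫_ℂ‖
        ≤ ∑ s, ‖⟪∑ r, c r • φ r, c s • φ s⟫_ℂ‖ := norm_sum_le _ _
      _ ≤ ∑ s, ∑ r, ‖⟪c r • φ r, c s • φ s⟫_ℂ‖ := by
          apply Finset.sum_le_sum
          intro s _
          rw [sum_inner]
          exact norm_sum_le _ _
      _ ≤ ∑ s, ∑ r, ‖⟪φ r, φ s⟫_ℂ‖ := by
          apply Finset.sum_le_sum; intro s _
          apply Finset.sum_le_sum; intro r _
          rw [inner_smul_right, inner_smul_left, norm_mul, norm_mul]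
          calc ‖c s‖ * (‖(starRingEnd ℂ) (c r)‖ * ‖⟪φ r, φ s⟫_ℂ‖)
              ≤ 1 * (1 * ‖⟪φ r, φ s⟫_ℂ‖) := by
                apply mul_le_mul (hcnorm s) _ (by positivity) zero_le_one
                apply mul_le_mul _ le_rfl (norm_nonneg _) zero_le_one
                rw [RCLike.norm_conj]; exact hcnorm r
            _ = ‖⟪φ r, φ s⟫_ℂ‖ := by ring
      _ = ∑ r, ∑ s, ‖⟪φ r, φ s⟫_ℂ‖ := Finset.sum_comm
  calc (∑ r, ‖⟪ξ, φ r⟫_ℂ‖) ≤ ‖ξ‖ * ‖v‖ := h2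
    _ ≤ ‖ξ‖ * Real.sqrt (∑ r, ∑ s, ‖⟪φ r, φ s⟫_ℂ‖) :=
        mul_le_mul_of_nonneg_left h3 (norm_nonneg _)
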